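/- arXiv:1808.01515 — 3 statements merged into one kernel-verified Lean document; each statement's English description precedes it below -/
import Mathlib

section
/- Under the same assumptions (measure-preserving ergodic C¹ flow with generator V on L²(μ), and a C¹ symmetric positive-definite kernel k with RKHS H, integral operator K, and K* the L²(μ)-inclusion of H), the range of K* lies in D(V), the operator VK* : H → L²(μ) is bounded, and W = K V K* : H → H is a well-defined Hilbert–Schmidt, skew-adjoint, real operator satisfying Wf = ∫ k̃'(·,y) f(y) dμ(y), where k̃'(x,y) = −k'(y,x) and k'(x,y) = (V k(·,y))(x). -/
open MeasureTheory Filter Topology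
open scoped InnerProductSpace

universe u

/-! For `h ∈ H` the difference quotient of `K* h = ⟪φ(·), h⟫` along the flow is, at each `x`, the
slope of `t ↦ ⟪φ(Φ_t x), h⟫`. It converges pointwise to `⟪φ'(x), h⟫`, and by the mean value
theorem it is bounded by `sup_X ‖φ'‖ ‖h‖` on the orbits that stay in the compact support `X`
(almost all of them), so dominated convergence gives `K* h ∈ D(V)` with `V K* h = ⟪φ'(·), h⟫`.
Since `∫ ‖φ'‖² < ∞`, Bessel's inequality makes `V K*` Hilbert–Schmidt, hence also `W = K V K*`.
Skew-adjointness of `W` comes from that of `V` on the range of `K*` (the Koopman operators are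
isometries), and the kernel formula is `(W h)(x) = ⟪K* φ(x), V K* h⟫ = -⟪V K* φ(x), K* h⟫`. -/

theorem L2.norm_sq_eq_integral_sq {α : Type*} [MeasurableSpace α] {μ : Measure α}
    (u : Lp ℝ 2 μ) {f : α → ℝ} (hu : u =ᵐ[μ] f) : ‖u‖ ^ 2 = ∫ x, f x ^ 2 ∂μ := by
  rw [← real_inner_self_eq_norm_sq, L2.inner_def]
  refine integral_congr_ae ?_
  filter_upwards [hu] with x hx
  simp [hx, sq]

theorem Lp.norm_eq_of_ae_eq_comp {α β E : Type*} [MeasurableSpace α] [MeasurableSpace β]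
    [NormedAddCommGroup E] {p : ENNReal} {μ : Measure α} {ν : Measure β} {T : α → β}
    (hT : MeasurePreserving T μ ν) {f : Lp E p ν} {g : Lp E p μ} (hg : g =ᵐ[μ] f ∘ T) :
    ‖g‖ = ‖f‖ := by
  rw [← Lp.norm_compMeasurePreserving f hT]
  congr 1
  exact Lp.ext (hg.trans (Lp.coeFn_compMeasurePreserving f hT).symm)

theorem L2.tendsto_zero_of_dominated {α ι : Type*} [MeasurableSpace α] {μ : Measure α}
    [IsFiniteMeasure μ] {l : Filter ι} [l.IsCountablyGenerated] {u : ι → Lp ℝ 2 μ}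
    {G : ι → α → ℝ} (C : ℝ) (hu : ∀ i, u i =ᵐ[μ] G i) (hbound : ∀ᵐ x ∂μ, ∀ i, |G i x| ≤ C)
    (hlim : ∀ᵐ x ∂μ, Tendsto (fun i => G i x) l (𝓝 0)) : Tendsto u l (𝓝 0) := by
  have hint : Tendsto (fun i => ∫ x, G i x ^ 2 ∂μ) l (𝓝 (∫ _, (0 : ℝ) ^ 2 ∂μ)) := by
    refine tendsto_integral_filter_of_dominated_convergence (fun _ => C ^ 2)
      (.of_forall fun i => ((Lp.aestronglyMeasurable (u i)).congr (hu i)).pow 2)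
      (.of_forall fun i => ?_) (integrable_const _) ?_
    · filter_upwards [hbound] with x hx
      rw [Real.norm_eq_abs, abs_pow]
      exact pow_le_pow_left₀ (abs_nonneg _) (hx i) 2
    · filter_upwards [hlim] with x hx using hx.pow 2
  have hsqrt := (Real.continuous_sqrt.tendsto _).comp hint
  simp only [zero_pow two_ne_zero, integral_zero, Real.sqrt_zero] at hsqrt
  refine tendsto_zero_iff_norm_tendsto_zero.2 (hsqrt.congr fun i => ?_)
  rw [Function.comp_apply, ← L2.norm_sq_eq_integral_sq _ (hu i), Real.sqrt_sq (norm_nonneg _)]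

theorem abs_slope_le_of_abs_deriv_le {F F' : ℝ → ℝ} {C : ℝ} (hF : ∀ s, HasDerivAt F (F' s) s)
    (hC : ∀ s, |F' s| ≤ C) (a b : ℝ) : |slope F a b| ≤ C := by
  have hmv := Convex.norm_image_sub_le_of_norm_hasDerivWithin_le
    (fun s _ => (hF s).hasDerivWithinAt) (fun s _ => hC s) convex_univ
    (Set.mem_univ a) (Set.mem_univ b)
  rcases eq_or_ne b a with rfl | hab
  · simpa using (abs_nonneg _).trans (hC b)
  · rw [slope_def_field, abs_div]
    exact (div_le_iff₀ (abs_pos.2 (sub_ne_zero.2 hab))).2 hmv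

section Flow

variable {α : Type*} {Φ : ℝ → α → α}

theorem hasDerivAt_comp_flow {F : Type*} [NormedAddCommGroup F] [NormedSpace ℝ F]
    (hΦ : ∀ s t x, Φ s (Φ t x) = Φ (s + t) x) {g g' : α → F}
    (hg : ∀ x, HasDerivAt (fun t => g (Φ t x)) (g' x) 0) (x : α) (s : ℝ) :
    HasDerivAt (fun t => g (Φ t x)) (g' (Φ s x)) s := by
  have h : HasDerivAt (fun t => g (Φ (t + s) x)) (g' (Φ s x)) (s - s) := by
    simpa only [hΦ, sub_self] using hg (Φ s x)
  simpa using h.comp_sub_const s s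

theorem ae_forall_flow_mem [TopologicalSpace α] [MeasurableSpace α] {μ : Measure α}
    {X : Set α} (hX : IsClosed X) (hXfull : μ Xᶜ = 0)
    (hΦ : ∀ t, Measure.QuasiMeasurePreserving (Φ t) μ μ) (hΦc : ∀ x, Continuous (Φ · x)) :
    ∀ᵐ x ∂μ, ∀ t, Φ t x ∈ X := by
  have hrat : ∀ᵐ x ∂μ, ∀ q : ℚ, Φ q x ∈ X :=
    ae_all_iff.2 fun q => (hΦ q).preimage_null hXfull
  filter_upwards [hrat] with x hx t
  exact Rat.denseRange_cast.induction_on t (hX.preimage (hΦc x)) hx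

theorem tendsto_slope_koopman [MeasurableSpace α] {μ : Measure α} [IsFiniteMeasure μ]
    (hΦ0 : ∀ x, Φ 0 x = x) (hΦ : ∀ s t x, Φ s (Φ t x) = Φ (s + t) x)
    (hΦmp : ∀ t, Measure.QuasiMeasurePreserving (Φ t) μ μ)
    {U : ℝ → Lp ℝ 2 μ →L[ℝ] Lp ℝ 2 μ} (hU : ∀ t f, U t f =ᵐ[μ] f ∘ Φ t)
    {F F' : α → ℝ} {u v : Lp ℝ 2 μ} (hu : u =ᵐ[μ] F) (hv : v =ᵐ[μ] F')
    (hF : ∀ x, HasDerivAt (fun t => F (Φ t x)) (F' x) 0) {C : ℝ}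
    (hC : ∀ᵐ x ∂μ, ∀ t, |F' (Φ t x)| ≤ C) :
    Tendsto (fun t : ℝ => t⁻¹ • (U t u - u)) (𝓝[≠] 0) (𝓝 v) := by
  set G : ℝ → α → ℝ := fun t x => slope (fun s => F (Φ s x)) 0 t - F' x
  have hG : ∀ t, t⁻¹ • (U t u - u) - v =ᵐ[μ] G t := fun t => by
    filter_upwards [Lp.coeFn_sub (t⁻¹ • (U t u - u)) v, Lp.coeFn_smul t⁻¹ (U t u - u),
      Lp.coeFn_sub (U t u) u, hU t u, (hΦmp t).ae_eq_comp hu, hu, hv]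
      with x h₁ h₂ h₃ h₄ h₅ h₆ h₇
    simp only [G, h₁, h₂, h₃, h₄, h₅, h₆, h₇, slope_def_module, hΦ0, Pi.sub_apply,
      Pi.smul_apply, Function.comp_apply, sub_zero]
  have hbound : ∀ᵐ x ∂μ, ∀ t, |G t x| ≤ C + C := by
    filter_upwards [hC] with x hx t
    refine (abs_sub _ _).trans (add_le_add ?_ (by simpa [hΦ0] using hx 0))
    exact abs_slope_le_of_abs_deriv_le (hasDerivAt_comp_flow hΦ hF x) hx 0 t
  have hlim : ∀ᵐ x ∂μ, Tendsto (fun t => G t x) (𝓝[≠] 0) (𝓝 0) :=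
    .of_forall fun x => tendsto_sub_nhds_zero_iff.2 (hasDerivAt_iff_tendsto_slope.1 (hF x))
  exact tendsto_sub_nhds_zero_iff.1 (L2.tendsto_zero_of_dominated _ hG hbound hlim)

end Flow

theorem inner_eq_neg_inner_of_tendsto_slope {E : Type*} [NormedAddCommGroup E]
    [InnerProductSpace ℝ E] {U : ℝ → E →L[ℝ] E} (hU : ∀ t f, ‖U t f‖ = ‖f‖) {f g f' g' : E}
    (hf : Tendsto (fun t : ℝ => t⁻¹ • (U t f - f)) (𝓝[≠] 0) (𝓝 f'))
    (hg : Tendsto (fun t : ℝ => t⁻¹ • (U t g - g)) (𝓝[≠] 0) (𝓝 g')) :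
    ⟪f', g⟫_ℝ = -⟪f, g'⟫_ℝ := by
  have hUg : Tendsto (fun t => U t g) (𝓝[≠] 0) (𝓝 g) := by
    have := ((tendsto_id.mono_left nhdsWithin_le_nhds).smul hg).add_const g
    rw [zero_smul, zero_add] at this
    refine this.congr' ?_
    filter_upwards [self_mem_nhdsWithin] with t (ht : t ≠ 0)
    simp [smul_smul, ht]
  -- `⟪t⁻¹ (U f - f), U g⟫ + ⟪f, t⁻¹ (U g - g)⟫ = t⁻¹ (⟪U f, U g⟫ - ⟪f, g⟫) = 0`
  have hsum := (hf.inner (𝕜 := ℝ) hUg).add ((tendsto_const_nhds (x := f)).inner (𝕜 := ℝ) hg)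
  refine eq_neg_of_add_eq_zero_left (tendsto_nhds_unique hsum (tendsto_const_nhds.congr' ?_))
  filter_upwards with t
  let Ut : E →ₗᵢ[ℝ] E := { toLinearMap := (U t : E →ₗ[ℝ] E), norm_map' := hU t }
  have hinner : ⟪U t f, U t g⟫_ℝ = ⟪f, g⟫_ℝ := Ut.inner_map_map f g
  simp only [real_inner_smul_left, real_inner_smul_right, inner_sub_left, inner_sub_right,
    hinner]
  ring

theorem adjoint_comp_eq_neg_of_inner_eq_neg {E F : Type*} [NormedAddCommGroup E]
    [InnerProductSpace ℝ E] [CompleteSpace E] [NormedAddCommGroup F] [InnerProductSpace ℝ F]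
    [CompleteSpace F] {K : F →L[ℝ] E} {T A : E →L[ℝ] F}
    (hKT : K.adjoint = T) (hA : ∀ f g, ⟪A f, T g⟫_ℝ = -⟪T f, A g⟫_ℝ) :
    (K ∘L A).adjoint = -(K ∘L A) := by
  have hK : ∀ f u, ⟪f, K u⟫_ℝ = ⟪T f, u⟫_ℝ := fun f u => by
    rw [← hKT, ContinuousLinearMap.adjoint_inner_left]
  refine ContinuousLinearMap.ext fun f => ext_inner_right ℝ fun g => ?_
  rw [ContinuousLinearMap.adjoint_inner_left, neg_apply, inner_neg_left,
    ContinuousLinearMap.comp_apply, ContinuousLinearMap.comp_apply, hK,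
    real_inner_comm g, hK, real_inner_comm (A f), hA, neg_neg]

theorem Summable.norm_sq_clm_apply {ι 𝕜 F G : Type*} [NontriviallyNormedField 𝕜]
    [NormedAddCommGroup F] [NormedSpace 𝕜 F] [NormedAddCommGroup G] [NormedSpace 𝕜 G]
    (L : F →L[𝕜] G) {w : ι → F} (hw : Summable fun i => ‖w i‖ ^ 2) :
    Summable fun i => ‖L (w i)‖ ^ 2 := by
  refine .of_nonneg_of_le (fun i => sq_nonneg _) (fun i => ?_) (hw.mul_left (‖L‖ ^ 2))
  rw [← mul_pow]
  exact pow_le_pow_left₀ (norm_nonneg _) (L.le_opNorm _) 2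

section InnerToL2

variable {α E : Type*} [MeasurableSpace α] {μ : Measure α} [NormedAddCommGroup E]
  [InnerProductSpace ℝ E] {ψ : α → E}

theorem memLp_two_inner_left (hψ : ∀ h, AEStronglyMeasurable (fun x => ⟪ψ x, h⟫_ℝ) μ)
    (hψ2 : Integrable (fun x => ‖ψ x‖ ^ 2) μ) (h : E) : MemLp (fun x => ⟪ψ x, h⟫_ℝ) 2 μ := by
  refine (memLp_two_iff_integrable_sq (hψ h)).2 <|
    (hψ2.mul_const (‖h‖ ^ 2)).mono' ((hψ h).pow 2) (ae_of_all _ fun x => ?_)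
  rw [Real.norm_eq_abs, abs_pow, ← mul_pow]
  exact pow_le_pow_left₀ (abs_nonneg _) (abs_real_inner_le_norm _ _) 2

theorem integral_inner_sq_le (hψ2 : Integrable (fun x => ‖ψ x‖ ^ 2) μ) (h : E) :
    ∫ x, ⟪ψ x, h⟫_ℝ ^ 2 ∂μ ≤ (∫ x, ‖ψ x‖ ^ 2 ∂μ) * ‖h‖ ^ 2 := by
  rw [← integral_mul_const]
  refine integral_mono_of_nonneg (ae_of_all _ fun x => sq_nonneg _) (hψ2.mul_const _)
    (ae_of_all _ fun x => ?_)
  dsimp only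
  rw [← mul_pow, ← sq_abs]
  exact pow_le_pow_left₀ (abs_nonneg _) (abs_real_inner_le_norm _ _) 2

/-- For `ψ` the derivative of the feature map along the flow, this is the operator `V K*`. -/
noncomputable def innerToL2 (hψ : ∀ h, AEStronglyMeasurable (fun x => ⟪ψ x, h⟫_ℝ) μ)
    (hψ2 : Integrable (fun x => ‖ψ x‖ ^ 2) μ) : E →L[ℝ] Lp ℝ 2 μ :=
  LinearMap.mkContinuous
    { toFun := fun h => (memLp_two_inner_left hψ hψ2 h).toLp _
      map_add' := fun f g => by
        rw [← MemLp.toLp_add]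
        exact MemLp.toLp_congr _ _ (ae_of_all _ fun x => inner_add_right _ _ _)
      map_smul' := fun c h => by
        rw [RingHom.id_apply, ← MemLp.toLp_const_smul]
        exact MemLp.toLp_congr _ _ (ae_of_all _ fun x => inner_smul_right _ _ _) }
    (√(∫ x, ‖ψ x‖ ^ 2 ∂μ)) fun h => by
      refine le_of_sq_le_sq ?_ (by positivity)
      rw [mul_pow, Real.sq_sqrt (integral_nonneg fun x => by positivity)]
      exact (L2.norm_sq_eq_integral_sq _ (memLp_two_inner_left hψ hψ2 h).coeFn_toLp).trans_le
        (integral_inner_sq_le hψ2 h)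

theorem coeFn_innerToL2 (hψ : ∀ h, AEStronglyMeasurable (fun x => ⟪ψ x, h⟫_ℝ) μ)
    (hψ2 : Integrable (fun x => ‖ψ x‖ ^ 2) μ) (h : E) :
    innerToL2 hψ hψ2 h =ᵐ[μ] fun x => ⟪ψ x, h⟫_ℝ :=
  (memLp_two_inner_left hψ hψ2 h).coeFn_toLp

theorem inner_innerToL2_left (hψ : ∀ h, AEStronglyMeasurable (fun x => ⟪ψ x, h⟫_ℝ) μ)
    (hψ2 : Integrable (fun x => ‖ψ x‖ ^ 2) μ) (h : E) {u : Lp ℝ 2 μ} {f : α → ℝ}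
    (hu : u =ᵐ[μ] f) : ⟪innerToL2 hψ hψ2 h, u⟫_ℝ = ∫ x, ⟪ψ x, h⟫_ℝ * f x ∂μ := by
  rw [L2.inner_def]
  refine integral_congr_ae ?_
  filter_upwards [coeFn_innerToL2 hψ hψ2 h, hu] with x hAx hux
  simp [hAx, hux, mul_comm]

theorem Orthonormal.summable_norm_innerToL2_sq
    (hψ : ∀ h, AEStronglyMeasurable (fun x => ⟪ψ x, h⟫_ℝ) μ)
    (hψ2 : Integrable (fun x => ‖ψ x‖ ^ 2) μ) {ι : Type*} {v : ι → E} (hv : Orthonormal ℝ v) :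
    Summable fun i => ‖innerToL2 hψ hψ2 (v i)‖ ^ 2 := by
  refine summable_of_sum_le (c := ∫ x, ‖ψ x‖ ^ 2 ∂μ) (fun i => sq_nonneg _) fun s => ?_
  have hint : ∀ i, Integrable (fun x => ⟪ψ x, v i⟫_ℝ ^ 2) μ := fun i =>
    (memLp_two_inner_left hψ hψ2 (v i)).integrable_sq
  calc ∑ i ∈ s, ‖innerToL2 hψ hψ2 (v i)‖ ^ 2
      = ∫ x, ∑ i ∈ s, ⟪ψ x, v i⟫_ℝ ^ 2 ∂μ := by
        rw [integral_finsetSum s fun i _ => hint i]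
        exact Finset.sum_congr rfl fun i _ =>
          L2.norm_sq_eq_integral_sq _ (coeFn_innerToL2 hψ hψ2 (v i))
    _ ≤ ∫ x, ‖ψ x‖ ^ 2 ∂μ := integral_mono (integrable_finsetSum s fun i _ => hint i) hψ2
        fun x => by simpa [real_inner_comm, sq_abs] using hv.sum_inner_products_le (ψ x) (s := s)

end InnerToL2

theorem Continuous.integrable_norm_sq_of_isCompact {α E : Type*} [TopologicalSpace α]
    [MeasurableSpace α] [OpensMeasurableSpace α] {μ : Measure α} [IsFiniteMeasure μ]
    [NormedAddCommGroup E] {f : α → E} (hf : Continuous f) {X : Set α} (hX : IsCompact X)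
    (hXfull : μ Xᶜ = 0) : Integrable (fun x => ‖f x‖ ^ 2) μ := by
  obtain ⟨M, hM⟩ := hX.exists_bound_of_continuousOn hf.continuousOn
  refine .of_bound (hf.norm.pow 2).aestronglyMeasurable (M ^ 2) ?_
  filter_upwards [mem_ae_iff.2 hXfull] with x hx
  simpa using pow_le_pow_left₀ (norm_nonneg _) (hM x hx) 2

theorem stmt5_general {α : Type u} [MeasurableSpace α] [MetricSpace α] [BorelSpace α]
    (μ : Measure α) [IsProbabilityMeasure μ]
    (X : Set α) (hXc : IsCompact X) (hXfull : μ Xᶜ = 0)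
    (Φ : ℝ → α → α)
    (hΦ0 : ∀ x, Φ 0 x = x)
    (hΦgrp : ∀ s t x, Φ s (Φ t x) = Φ (s + t) x)
    (hΦcont : Continuous fun p : ℝ × α => Φ p.1 p.2)
    (hΦmp : ∀ t, MeasurePreserving (Φ t) μ μ)
    (k k' : α → α → ℝ)
    (hk' : ∀ x y, HasDerivAt (fun t => k (Φ t x) y) (k' x y) 0)
    (Koop : ℝ → Lp ℝ 2 μ →L[ℝ] Lp ℝ 2 μ)
    (hKoop : ∀ t (f : Lp ℝ 2 μ), ∀ᵐ x ∂μ, (Koop t f) x = f (Φ t x))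
    (V : Lp ℝ 2 μ →ₗ.[ℝ] Lp ℝ 2 μ)
    (hVgen : ∀ f (hf : f ∈ V.domain),
      Tendsto (fun t : ℝ => t⁻¹ • (Koop t f - f)) (𝓝[≠] (0 : ℝ)) (𝓝 (V ⟨f, hf⟩)))
    (hVdom : ∀ f g : Lp ℝ 2 μ,
      Tendsto (fun t : ℝ => t⁻¹ • (Koop t f - f)) (𝓝[≠] (0 : ℝ)) (𝓝 g) → f ∈ V.domain)
    -- the RKHS of `k`, encoded by its feature map:
    {HK : Type u} [NormedAddCommGroup HK] [InnerProductSpace ℝ HK] [CompleteSpace HK]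
    (φf φd : α → HK) (hφdc : Continuous φd)
    (hφk : ∀ x y, (inner ℝ (φf x) (φf y) : ℝ) = k x y)
    (hφd : ∀ x, HasDerivAt (fun t => φf (Φ t x)) (φd x) 0)
    (K : Lp ℝ 2 μ →L[ℝ] HK) (Kst : HK →L[ℝ] Lp ℝ 2 μ)
    (hadj : ContinuousLinearMap.adjoint K = Kst)
    (hKst : ∀ h : HK, ∀ᵐ x ∂μ, (Kst h) x = (inner ℝ (φf x) h : ℝ)) :
    (∀ h : HK, Kst h ∈ V.domain) ∧
    (∃ C : ℝ, 0 ≤ C ∧ ∀ h (hh : Kst h ∈ V.domain), ‖V ⟨Kst h, hh⟩‖ ≤ C * ‖h‖) ∧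
    ∃ W : HK →L[ℝ] HK,
      (∀ h (hh : Kst h ∈ V.domain), W h = K (V ⟨Kst h, hh⟩)) ∧
      ContinuousLinearMap.adjoint W = -W ∧
      (∀ {ι : Type u} (b : HilbertBasis ι ℝ HK), Summable fun i => ‖W (b i)‖ ^ 2) ∧
      (∀ h : HK, ∀ᵐ x ∂μ,
        (Kst (W h)) x = ∫ y, (-(k' y x)) * (inner ℝ (φf y) h : ℝ) ∂μ) := by
  have hΦqmp : ∀ t, Measure.QuasiMeasurePreserving (Φ t) μ μ := fun t =>
    (hΦmp t).quasiMeasurePreserving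
  have horbit : ∀ᵐ x ∂μ, ∀ t, Φ t x ∈ X := ae_forall_flow_mem hXc.isClosed hXfull hΦqmp
    fun x => hΦcont.comp (continuous_id.prodMk continuous_const)
  obtain ⟨M, hM⟩ := hXc.exists_bound_of_continuousOn hφdc.continuousOn
  have hψ : ∀ h, AEStronglyMeasurable (fun x => ⟪φd x, h⟫_ℝ) μ := fun h =>
    (hφdc.inner continuous_const).aestronglyMeasurable
  have hψ2 := hφdc.integrable_norm_sq_of_isCompact hXc hXfull
  set A := innerToL2 hψ hψ2
  have hconv : ∀ h, Tendsto (fun t : ℝ => t⁻¹ • (Koop t (Kst h) - Kst h)) (𝓝[≠] 0) (𝓝 (A h)) :=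
    fun h => tendsto_slope_koopman hΦ0 hΦgrp hΦqmp hKoop (hKst h) (coeFn_innerToL2 hψ hψ2 h)
      (fun x => by simpa using (hφd x).inner ℝ (hasDerivAt_const 0 h)) (C := M * ‖h‖) <| by
        filter_upwards [horbit] with x hx t
        exact (abs_real_inner_le_norm _ _).trans
          (mul_le_mul_of_nonneg_right (hM _ (hx t)) (norm_nonneg _))
  have hV : ∀ h hh, V ⟨Kst h, hh⟩ = A h := fun h hh =>
    tendsto_nhds_unique (hVgen _ hh) (hconv h)
  have hskew : ∀ f g, ⟪A f, Kst g⟫_ℝ = -⟪Kst f, A g⟫_ℝ := fun f g =>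
    inner_eq_neg_inner_of_tendsto_slope
      (fun t f => Lp.norm_eq_of_ae_eq_comp (hΦmp t) (hKoop t f)) (hconv f) (hconv g)
  have hk'_eq : ∀ y x, k' y x = ⟪φd y, φf x⟫_ℝ := fun y x => (hk' y x).unique <| by
    simpa only [hφk, inner_zero_right, zero_add] using (hφd y).inner ℝ (hasDerivAt_const 0 (φf x))
  refine ⟨fun h => hVdom _ _ (hconv h), ⟨‖A‖, norm_nonneg _, fun h hh => hV h hh ▸ A.le_opNorm h⟩,
    K ∘L A, fun h hh => by rw [hV]; rfl, adjoint_comp_eq_neg_of_inner_eq_neg hadj hskew,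
    fun b => (b.orthonormal.summable_norm_innerToL2_sq hψ hψ2).norm_sq_clm_apply K, fun h => ?_⟩
  filter_upwards [hKst (K (A h))] with x hx
  rw [ContinuousLinearMap.comp_apply, hx, ← ContinuousLinearMap.adjoint_inner_left, hadj,
    ← neg_neg ⟪Kst (φf x), A h⟫_ℝ, ← hskew, inner_innerToL2_left hψ hψ2 _ (hKst h),
    ← integral_neg]
  simp [hk'_eq]

/-- Compactification in RKHS.  With a measure-preserving ergodic `C¹` flow with
skew-adjoint Koopman generator `V` on `L²(μ)` and a `C¹` symmetric positive-definite
kernel `k` with RKHS `H_K` (encoded via a `C¹` feature map `φf` with derivative `φd`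
along the flow, and `k(x,y) = ⟪φf(x), φf(y)⟫`), integral operator `K : L²(μ) → H_K` and
`K* = Kst` the `L²(μ)`-inclusion of `H_K` (the adjoint of `K`): the range of `K*` lies in
`D(V)`, `V K* : H_K → L²(μ)` is bounded, and `W = K V K* : H_K → H_K` is a well-defined
Hilbert–Schmidt skew-adjoint operator satisfying
`(W h)(x) = ∫ k̃'(x,y) h(y) dμ(y)` with `k̃'(x,y) = −k'(y,x)`,
`k'(x,y) = (V k(·,y))(x)`.  (Over `ℝ`, `W` is automatically a real operator.) -/
theorem stmt5 {α : Type u} [MeasurableSpace α] [MetricSpace α] [BorelSpace α]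
    (μ : Measure α) [IsProbabilityMeasure μ]
    (X : Set α) (hXc : IsCompact X) (hXfull : μ Xᶜ = 0)
    (Φ : ℝ → α → α)
    (hΦ0 : ∀ x, Φ 0 x = x)
    (hΦgrp : ∀ s t x, Φ s (Φ t x) = Φ (s + t) x)
    (hΦcont : Continuous fun p : ℝ × α => Φ p.1 p.2)
    (hΦmp : ∀ t, MeasurePreserving (Φ t) μ μ)
    (k k' : α → α → ℝ)
    (hksymm : ∀ x y, k x y = k y x)
    (hkC : Continuous fun p : α × α => k p.1 p.2)
    (hk'C : Continuous fun p : α × α => k' p.1 p.2)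
    (hk' : ∀ x y, HasDerivAt (fun t => k (Φ t x) y) (k' x y) 0)
    (Koop : ℝ → Lp ℝ 2 μ →L[ℝ] Lp ℝ 2 μ)
    (hKoop : ∀ t (f : Lp ℝ 2 μ), ∀ᵐ x ∂μ, (Koop t f) x = f (Φ t x))
    (V : Lp ℝ 2 μ →ₗ.[ℝ] Lp ℝ 2 μ)
    (hVgen : ∀ f (hf : f ∈ V.domain),
      Tendsto (fun t : ℝ => t⁻¹ • (Koop t f - f)) (𝓝[≠] (0 : ℝ)) (𝓝 (V ⟨f, hf⟩)))
    (hVdom : ∀ f g : Lp ℝ 2 μ,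
      Tendsto (fun t : ℝ => t⁻¹ • (Koop t f - f)) (𝓝[≠] (0 : ℝ)) (𝓝 g) → f ∈ V.domain)
    -- the RKHS of `k`, encoded by its feature map:
    {HK : Type u} [NormedAddCommGroup HK] [InnerProductSpace ℝ HK] [CompleteSpace HK]
    (φf φd : α → HK) (hφc : Continuous φf) (hφdc : Continuous φd)
    (hφk : ∀ x y, (inner ℝ (φf x) (φf y) : ℝ) = k x y)
    (hφd : ∀ x, HasDerivAt (fun t => φf (Φ t x)) (φd x) 0)
    (K : Lp ℝ 2 μ →L[ℝ] HK) (Kst : HK →L[ℝ] Lp ℝ 2 μ)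
    (hadj : ContinuousLinearMap.adjoint K = Kst)
    (hKst : ∀ h : HK, ∀ᵐ x ∂μ, (Kst h) x = (inner ℝ (φf x) h : ℝ)) :
    (∀ h : HK, Kst h ∈ V.domain) ∧
    (∃ C : ℝ, 0 ≤ C ∧ ∀ h (hh : Kst h ∈ V.domain), ‖V ⟨Kst h, hh⟩‖ ≤ C * ‖h‖) ∧
    ∃ W : HK →L[ℝ] HK,
      (∀ h (hh : Kst h ∈ V.domain), W h = K (V ⟨Kst h, hh⟩)) ∧
      ContinuousLinearMap.adjoint W = -W ∧
      (∀ {ι : Type u} (b : HilbertBasis ι ℝ HK), Summable fun i => ‖W (b i)‖ ^ 2) ∧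
      (∀ h : HK, ∀ᵐ x ∂μ,
        (Kst (W h)) x = ∫ y, (-(k' y x)) * (inner ℝ (φf y) h : ℝ) ∂μ) :=
  stmt5_general μ X hXc hXfull Φ hΦ0 hΦgrp hΦcont hΦmp k k' hk' Koop hKoop V hVgen hVdom φf φd hφdc
    hφk hφd K Kst hadj hKst
end

section
/- Let G : L²(ν) → L²(ν) be a compact, positive, self-adjoint Markov operator that is ergodic (Gf = f iff f is constant) with simple top eigenvalue λ₀ = 1 and eigenvalues 1 = λ₀ > λ₁ ≥ λ₂ ≥ … > 0, with orthonormal eigenbasis {φ_j}. For τ > 0 define G_τ with the same eigenfunctions and eigenvalues λ_{τ,j} = exp(τ(1 − λ_j^{-1})), and set G₀ = Id. Then the family {G_τ}_{τ≥0} is a strongly continuous self-adjoint semigroup of Markov operators: G_{τ₁+τ₂} = G_{τ₁} G_{τ₂} for all τ₁, τ₂ ≥ 0, each G_τ (τ > 0) is positive, preserves integrals (∫ G_τ f dν = ∫ f dν), fixes constants, is ergodic, and G_τ → Id strongly as τ → 0⁺. -/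
/-!
Every `G_τ`, `τ ≥ 0`, is diagonal in the Hilbert basis `b` with multipliers
`μ_j(τ) = exp (τ (1 - λ_j⁻¹)) ∈ (0, 1]`, and `μ_j(τ₁ + τ₂) = μ_j(τ₁) μ_j(τ₂)`. Since `b 0 = 1`
and `μ_0 = 1`, pairing with `b 0`, which is integration, is preserved and constants are fixed,
while `μ_j(τ) < 1` for `j ≥ 1` kills every other coefficient of a fixed vector. Strong
continuity is dominated convergence in `‖G_τ f - f‖² = ∑ⱼ (μ_j(τ) - 1)² ⟪b j, f⟫²`.
-/

open MeasureTheory Filter Topology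
open scoped InnerProductSpace

namespace HilbertBasis

variable {ι E : Type*} [NormedAddCommGroup E] [InnerProductSpace ℝ E] (b : HilbertBasis ι ℝ E)

theorem ext_continuousLinearMap {F : Type*} [NormedAddCommGroup F] [NormedSpace ℝ F]
    {A B : E →L[ℝ] F} (h : ∀ i, A (b i) = B (b i)) : A = B :=
  ContinuousLinearMap.ext_on (Submodule.dense_iff_topologicalClosure_eq_top.mpr b.dense_span)
    (by rintro _ ⟨i, rfl⟩; exact h i)

theorem eq_inner_smul_of_inner_eq_zero {i : ι} {x : E} (h : ∀ j ≠ i, ⟪b j, x⟫_ℝ = 0) :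
    x = ⟪b i, x⟫_ℝ • b i := by
  rw [← b.repr_apply_apply]
  exact (b.hasSum_repr x).unique <| hasSum_single i fun j hj => by
    rw [b.repr_apply_apply, h j hj, zero_smul]

section Diagonal

variable {A : E →L[ℝ] E} {m : ι → ℝ}

theorem inner_apply_of_diagonal (hA : ∀ i, A (b i) = m i • b i) (i : ι) (x : E) :
    ⟪b i, A x⟫_ℝ = m i * ⟪b i, x⟫_ℝ := by
  have h : (innerSL ℝ (b i)).comp A = m i • innerSL ℝ (b i) :=
    b.ext_continuousLinearMap fun j => by
      by_cases hij : i = j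
      · subst hij; simp [hA]
      · simp [hA, b.orthonormal.2 hij]
  simpa using congr($h x)

theorem isSelfAdjoint_of_diagonal [CompleteSpace E] (hA : ∀ i, A (b i) = m i • b i) :
    IsSelfAdjoint A := by
  refine ContinuousLinearMap.isSelfAdjoint_iff_isSymmetric.mpr fun x y => ?_
  refine (b.hasSum_inner_mul_inner (A x) y).unique
    ((b.hasSum_inner_mul_inner x (A y)).congr_fun fun i => ?_)
  rw [real_inner_comm (b i) (A x), b.inner_apply_of_diagonal hA, b.inner_apply_of_diagonal hA,
    real_inner_comm (b i) x]
  ring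

theorem inner_apply_self_nonneg_of_diagonal (hA : ∀ i, A (b i) = m i • b i)
    (hm : ∀ i, 0 ≤ m i) (x : E) : 0 ≤ ⟪x, A x⟫_ℝ :=
  (b.hasSum_inner_mul_inner x (A x)).nonneg fun i => by
    rw [b.inner_apply_of_diagonal hA, real_inner_comm (b i) x, mul_left_comm]
    exact mul_nonneg (hm i) (mul_self_nonneg _)

theorem hasSum_sq_of_diagonal (hA : ∀ i, A (b i) = m i • b i) (x : E) :
    HasSum (fun i => (m i * ⟪b i, x⟫_ℝ) ^ 2) (‖A x‖ ^ 2) := by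
  rw [← real_inner_self_eq_norm_sq]
  refine (b.hasSum_inner_mul_inner (A x) (A x)).congr_fun fun i => ?_
  rw [real_inner_comm (b i) (A x), b.inner_apply_of_diagonal hA]
  ring

theorem inner_eq_zero_of_apply_eq_self (hA : ∀ i, A (b i) = m i • b i) {x : E} (hx : A x = x)
    {i : ι} (hi : m i ≠ 1) : ⟪b i, x⟫_ℝ = 0 := by
  have h := b.inner_apply_of_diagonal hA i x
  rw [hx] at h
  have h' : (m i - 1) * ⟪b i, x⟫_ℝ = 0 := by linear_combination -h
  exact (mul_eq_zero.mp h').resolve_left (sub_ne_zero.mpr hi)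

theorem tendsto_apply_of_diagonal {α : Type*} {l : Filter α} {A : α → E →L[ℝ] E}
    {m : α → ι → ℝ} (hA : ∀ᶠ t in l, ∀ i, A t (b i) = m t i • b i)
    (hm : ∀ᶠ t in l, ∀ i, m t i ∈ Set.Icc (0 : ℝ) 1) (hlim : ∀ i, Tendsto (m · i) l (𝓝 1))
    (x : E) : Tendsto (fun t => A t x) l (𝓝 x) := by
  have hnorm : ∀ᶠ t in l, ∑' i, ((m t i - 1) * ⟪b i, x⟫_ℝ) ^ 2 = ‖A t x - x‖ ^ 2 :=
    hA.mono fun t ht => (b.hasSum_sq_of_diagonal (A := A t - 1)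
      (fun i => by simp [ht i, sub_smul]) x).tsum_eq
  have hsq : Tendsto (fun t => ‖A t x - x‖ ^ 2) l (𝓝 0) := by
    refine Tendsto.congr' hnorm ?_
    simpa using tendsto_tsum_of_dominated_convergence (b.orthonormal.inner_products_summable x)
      (fun i => (((hlim i).sub_const 1).mul_const _).pow 2)
      (hm.mono fun t ht i => by
        rw [norm_pow, norm_mul]
        refine pow_le_pow_left₀ (by positivity) (mul_le_of_le_one_left (norm_nonneg _) ?_) 2
        rw [Real.norm_eq_abs, abs_le]
        constructor <;> linarith [(ht i).1, (ht i).2])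
  rw [tendsto_iff_norm_sub_tendsto_zero]
  simpa [Real.sqrt_sq (norm_nonneg _)] using hsq.sqrt

end Diagonal

end HilbertBasis

namespace MeasureTheory.Lp

variable {α : Type*} [MeasurableSpace α] {ν : Measure α} {e : Lp ℝ 2 ν}

theorem inner_eq_integral_of_ae_eq_one (he : ⇑e =ᵐ[ν] fun _ => (1 : ℝ)) (g : Lp ℝ 2 ν) :
    ⟪e, g⟫_ℝ = ∫ x, g x ∂ν := by
  rw [L2.inner_def]
  refine integral_congr_ae ?_
  filter_upwards [he] with a ha
  simp [ha]

theorem coeFn_smul_ae_eq_const (he : ⇑e =ᵐ[ν] fun _ => (1 : ℝ)) (c : ℝ) :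
    ⇑(c • e) =ᵐ[ν] fun _ => c := by
  filter_upwards [Lp.coeFn_smul c e, he] with a h₁ h₂
  simp [h₁, h₂]

theorem eq_smul_of_ae_eq_const (he : ⇑e =ᵐ[ν] fun _ => (1 : ℝ)) {f : Lp ℝ 2 ν} {c : ℝ}
    (hf : ⇑f =ᵐ[ν] fun _ => c) : f = c • e :=
  Lp.ext (hf.trans (coeFn_smul_ae_eq_const he c).symm)

end MeasureTheory.Lp

theorem Real.exp_mul_one_sub_inv_mem_Icc {a τ : ℝ} (ha : 0 < a) (ha₁ : a ≤ 1) (hτ : 0 ≤ τ) :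
    Real.exp (τ * (1 - a⁻¹)) ∈ Set.Icc 0 1 := by
  refine ⟨(Real.exp_pos _).le, Real.exp_le_one_iff.mpr (mul_nonpos_of_nonneg_of_nonpos hτ ?_)⟩
  linarith [one_le_inv_iff₀.mpr ⟨ha, ha₁⟩]

theorem Real.exp_mul_one_sub_inv_lt_one {a τ : ℝ} (ha : 0 < a) (ha₁ : a < 1) (hτ : 0 < τ) :
    Real.exp (τ * (1 - a⁻¹)) < 1 := by
  refine Real.exp_lt_one_iff.mpr (mul_neg_of_pos_of_neg hτ ?_)
  linarith [(one_lt_inv₀ ha).mpr ha₁]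

theorem stmt8_general {α : Type*} [MeasurableSpace α]
    (ν : Measure α)
    (b : HilbertBasis ℕ ℝ (Lp ℝ 2 ν))
    (lam : ℕ → ℝ)
    (hlam0 : lam 0 = 1) (hlampos : ∀ j, 0 < lam j)
    (hlt : ∀ j, 1 ≤ j → lam j < 1)
    (hb0 : ⇑(b 0) =ᵐ[ν] fun _ => (1 : ℝ))
    (Gτ : ℝ → Lp ℝ 2 ν →L[ℝ] Lp ℝ 2 ν)
    (hGτ0 : Gτ 0 = ContinuousLinearMap.id ℝ (Lp ℝ 2 ν))
    (hGτeig : ∀ τ > (0 : ℝ), ∀ j, Gτ τ (b j) = Real.exp (τ * (1 - (lam j)⁻¹)) • b j) :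
    (∀ τ₁ τ₂ : ℝ, 0 ≤ τ₁ → 0 ≤ τ₂ → Gτ (τ₁ + τ₂) = (Gτ τ₁).comp (Gτ τ₂)) ∧
    (∀ τ : ℝ, 0 ≤ τ → IsSelfAdjoint (Gτ τ)) ∧
    (∀ τ > (0 : ℝ), ∀ f : Lp ℝ 2 ν, 0 ≤ (inner ℝ f (Gτ τ f) : ℝ)) ∧
    (∀ τ > (0 : ℝ), ∀ f : Lp ℝ 2 ν, ∫ x, (Gτ τ f) x ∂ν = ∫ x, f x ∂ν) ∧
    (∀ τ > (0 : ℝ), ∀ (c : ℝ) (f : Lp ℝ 2 ν), ⇑f =ᵐ[ν] (fun _ => c) → Gτ τ f = f) ∧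
    (∀ τ > (0 : ℝ), ∀ f : Lp ℝ 2 ν, Gτ τ f = f → ∃ c : ℝ, ⇑f =ᵐ[ν] fun _ => c) ∧
    (∀ f : Lp ℝ 2 ν, Tendsto (fun τ => Gτ τ f) (𝓝[>] (0 : ℝ)) (𝓝 f)) := by
  have hlam_le : ∀ j, lam j ≤ 1 := fun j => by
    rcases j with _ | j
    exacts [hlam0.le, (hlt _ j.succ_pos).le]
  have hdiag : ∀ τ, 0 ≤ τ → ∀ j, Gτ τ (b j) = Real.exp (τ * (1 - (lam j)⁻¹)) • b j := by
    intro τ hτ j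
    rcases hτ.eq_or_lt with rfl | hτ
    exacts [by simp [hGτ0], hGτeig τ hτ j]
  have hmul_mem : ∀ τ, 0 ≤ τ → ∀ j, Real.exp (τ * (1 - (lam j)⁻¹)) ∈ Set.Icc 0 1 :=
    fun τ hτ j => Real.exp_mul_one_sub_inv_mem_Icc (hlampos j) (hlam_le j) hτ
  have hfix0 : ∀ τ, 0 ≤ τ → Gτ τ (b 0) = b 0 := fun τ hτ => by simpa [hlam0] using hdiag τ hτ 0
  refine ⟨fun τ₁ τ₂ h₁ h₂ => b.ext_continuousLinearMap fun j => ?_,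
    fun τ hτ => b.isSelfAdjoint_of_diagonal (hdiag τ hτ),
    fun τ hτ => b.inner_apply_self_nonneg_of_diagonal (hdiag τ hτ.le) fun j =>
      (hmul_mem τ hτ.le j).1,
    fun τ hτ f => ?_, fun τ hτ c f hf => ?_, fun τ hτ f hf => ?_, fun f => ?_⟩
  · rw [ContinuousLinearMap.comp_apply, hdiag _ (add_nonneg h₁ h₂), hdiag _ h₂, map_smul,
      hdiag _ h₁, smul_smul, ← Real.exp_add]
    ring_nf
  · rw [← Lp.inner_eq_integral_of_ae_eq_one hb0, ← Lp.inner_eq_integral_of_ae_eq_one hb0,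
      b.inner_apply_of_diagonal (hdiag τ hτ.le), hlam0]
    simp
  · rw [Lp.eq_smul_of_ae_eq_const hb0 hf, map_smul, hfix0 τ hτ.le]
  · have hf0 : f = ⟪b 0, f⟫_ℝ • b 0 := b.eq_inner_smul_of_inner_eq_zero fun j hj =>
      b.inner_eq_zero_of_apply_eq_self (hdiag τ hτ.le) hf
        (Real.exp_mul_one_sub_inv_lt_one (hlampos j) (hlt j (Nat.one_le_iff_ne_zero.mpr hj)) hτ).ne
    refine ⟨⟪b 0, f⟫_ℝ, ?_⟩
    nth_rw 1 [hf0]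
    exact Lp.coeFn_smul_ae_eq_const hb0 _
  · refine b.tendsto_apply_of_diagonal
      (eventually_nhdsWithin_of_forall fun τ hτ => hdiag τ (le_of_lt hτ))
      (eventually_nhdsWithin_of_forall fun τ hτ => hmul_mem τ (le_of_lt hτ)) (fun j => ?_) f
    exact (Continuous.tendsto' (by fun_prop) 0 1 (by simp)).mono_left nhdsWithin_le_nhds

/-- Markov semigroup theorem. Let `G` be a compact, positive, self-adjoint, strictly
positive (injective) Markov operator on `L²(ν)` that is ergodic, with orthonormal
eigenbasis `{φ_j}` (with `φ₀` the constant function `1`) and eigenvalues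
`1 = λ₀ > λ₁ ≥ λ₂ ≥ … > 0`. For `τ > 0` define `G_τ` with the same eigenfunctions and
eigenvalues `λ_{τ,j} = exp(τ(1 − λ_j⁻¹))`, and set `G₀ = Id`. Then `{G_τ}_{τ≥0}` is a
strongly continuous self-adjoint semigroup of Markov operators: `G_{τ₁+τ₂} = G_{τ₁} G_{τ₂}`;
each `G_τ` (τ > 0) is positive, preserves integrals, fixes constants, and is ergodic; and
`G_τ → Id` strongly as `τ → 0⁺`. -/
theorem stmt8 {α : Type*} [MeasurableSpace α]
    (ν : Measure α) [IsProbabilityMeasure ν]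
    (G : Lp ℝ 2 ν →L[ℝ] Lp ℝ 2 ν)
    (hGcpt : IsCompactOperator G) (hGsa : IsSelfAdjoint G)
    (hGinj : Function.Injective G)
    (b : HilbertBasis ℕ ℝ (Lp ℝ 2 ν))
    (lam : ℕ → ℝ)
    (hGeig : ∀ j, G (b j) = lam j • b j)
    (hlam0 : lam 0 = 1) (hlampos : ∀ j, 0 < lam j)
    (hanti : Antitone lam) (hlt : ∀ j, 1 ≤ j → lam j < 1)
    (hb0 : ⇑(b 0) =ᵐ[ν] fun _ => (1 : ℝ))
    (Gτ : ℝ → Lp ℝ 2 ν →L[ℝ] Lp ℝ 2 ν)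
    (hGτ0 : Gτ 0 = ContinuousLinearMap.id ℝ (Lp ℝ 2 ν))
    (hGτeig : ∀ τ > (0 : ℝ), ∀ j, Gτ τ (b j) = Real.exp (τ * (1 - (lam j)⁻¹)) • b j) :
    (∀ τ₁ τ₂ : ℝ, 0 ≤ τ₁ → 0 ≤ τ₂ → Gτ (τ₁ + τ₂) = (Gτ τ₁).comp (Gτ τ₂)) ∧
    (∀ τ : ℝ, 0 ≤ τ → IsSelfAdjoint (Gτ τ)) ∧
    (∀ τ > (0 : ℝ), ∀ f : Lp ℝ 2 ν, 0 ≤ (inner ℝ f (Gτ τ f) : ℝ)) ∧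
    (∀ τ > (0 : ℝ), ∀ f : Lp ℝ 2 ν, ∫ x, (Gτ τ f) x ∂ν = ∫ x, f x ∂ν) ∧
    (∀ τ > (0 : ℝ), ∀ (c : ℝ) (f : Lp ℝ 2 ν), ⇑f =ᵐ[ν] (fun _ => c) → Gτ τ f = f) ∧
    (∀ τ > (0 : ℝ), ∀ f : Lp ℝ 2 ν, Gτ τ f = f → ∃ c : ℝ, ⇑f =ᵐ[ν] fun _ => c) ∧
    (∀ f : Lp ℝ 2 ν, Tendsto (fun τ => Gτ τ f) (𝓝[>] (0 : ℝ)) (𝓝 f)) :=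
  stmt8_general ν b lam hlam0 hlampos hlt hb0 Gτ hGτ0 hGτeig
end

section
/- Let U^t = e^{tV} be a unitary group on L²(μ) with skew-adjoint generator V, and suppose (iω_τ)_{τ>0} is a family converging to iω and (z_τ) a family of unit vectors such that for every ε > 0 and every t in some interval growing to all of ℝ as τ → 0⁺, ‖U^t z_τ − e^{iω_τ t} z_τ‖ < ε (i.e., (e^{iω_τ t}, z_τ) are ε-approximate eigenpairs of U^t on intervals of diverging length). Then iω lies in the spectrum of V. -/
/-!
If `iω - V` had a bounded inverse `R`, put `f = R z` for an approximate eigenvector `z`, so that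
`(iω - V) f = z`. The twisted orbit `G s = e^{-iωs} U^s f` has derivative `-e^{-iωs} U^s z`,
which stays within `‖z‖/2` of `-z` on `[0, t]` as long as `z` is an approximate eigenvector on
`[0, t]` with eigenfrequency close to `ω`. By the mean value inequality `G` then moves by at
least `t‖z‖/2` over `[0, t]`, while `‖G‖ ≤ ‖f‖ ≤ ‖R‖‖z‖` throughout. Since the intervals of
approximate eigenvalue behaviour grow without bound as `τ → 0⁺`, this is impossible.
-/

open Filter Topology Set

theorem mul_sub_le_norm_image_sub_of_norm_deriv_sub_le {E : Type*} [NormedAddCommGroup E]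
    [NormedSpace ℝ E] {G G' : ℝ → E} {v : E} {δ t : ℝ} (ht : 0 ≤ t)
    (hG : ∀ s ∈ Icc 0 t, HasDerivAt G (G' s) s) (hG' : ∀ s ∈ Ico 0 t, ‖G' s - v‖ ≤ δ) :
    t * (‖v‖ - δ) ≤ ‖G t - G 0‖ := by
  have hK : ∀ s ∈ Icc 0 t, HasDerivWithinAt (G - fun s => s • v) (G' s - v) (Icc 0 t) s :=
    fun s hs => by
      simpa only [one_smul] using
        ((hG s hs).sub ((hasDerivAt_id' s).smul_const v)).hasDerivWithinAt
  have hMVT : ‖G t - G 0 - t • v‖ ≤ δ * t := by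
    simpa [sub_right_comm _ (t • v)] using
      norm_image_sub_le_of_norm_deriv_le_segment' hK hG' t (right_mem_Icc.2 ht)
  calc t * (‖v‖ - δ) = ‖t • v‖ - δ * t := by rw [norm_smul, Real.norm_of_nonneg ht]; ring
    _ ≤ ‖t • v‖ - ‖G t - G 0 - t • v‖ := by linarith
    _ ≤ ‖G t - G 0‖ := by
      simpa [norm_sub_rev (t • v)] using norm_sub_norm_le (t • v) (t • v - (G t - G 0))

section OneParameterGroup

open Complex

variable {E : Type*} [NormedAddCommGroup E] [NormedSpace ℂ E] {U : ℝ → E →L[ℂ] E}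

theorem hasDerivAt_orbit_of_tendsto_generator (hU : ∀ s t : ℝ, U (s + t) = (U s).comp (U t))
    {f g : E} (hf : Tendsto (fun t : ℝ => (t : ℂ)⁻¹ • (U t f - f)) (𝓝[≠] 0) (𝓝 g)) (s : ℝ) :
    HasDerivAt (fun t => U t f) (U s g) s := by
  rw [hasDerivAt_iff_tendsto_slope_zero]
  refine (((U s).continuous.tendsto g).comp hf).congr fun t => ?_
  rw [Function.comp_apply, map_smul, map_sub, hU, ContinuousLinearMap.comp_apply, ← ofReal_inv,
    Complex.coe_smul]

theorem hasDerivAt_exp_smul_orbit (hU : ∀ s t : ℝ, U (s + t) = (U s).comp (U t))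
    {f g : E} (hf : Tendsto (fun t : ℝ => (t : ℂ)⁻¹ • (U t f - f)) (𝓝[≠] 0) (𝓝 g))
    (a : ℂ) (s : ℝ) :
    HasDerivAt (fun t : ℝ => cexp (a * t) • U t f) (cexp (a * s) • U s (g + a • f)) s := by
  have hexp : HasDerivAt (fun t : ℝ => cexp (a * t)) (cexp (a * s) * a) s := by
    simpa using (ofRealCLM.hasDerivAt.const_mul a).cexp
  refine (hexp.smul (hasDerivAt_orbit_of_tendsto_generator hU hf s)).congr_deriv ?_
  rw [map_add, map_smul, smul_add, smul_smul, add_comm]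

theorem norm_sub_exp_smul_le (z w : E) (ω ω' s : ℝ) :
    ‖z - cexp (-(I * ω) * s) • w‖ ≤ ‖w - cexp (I * (ω' * s)) • z‖ + |ω' - ω| * |s| * ‖z‖ := by
  have hphase : cexp (-(I * ω) * s) * cexp (I * (ω' * s)) = cexp (I * ((ω' - ω) * s : ℝ)) := by
    rw [← Complex.exp_add]; push_cast; ring_nf
  have hsplit : z - cexp (-(I * ω) * s) • w = (1 - cexp (I * ((ω' - ω) * s : ℝ))) • z
      - cexp (-(I * ω) * s) • (w - cexp (I * (ω' * s)) • z) := by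
    rw [smul_sub, smul_smul, hphase, sub_smul, one_smul]; abel
  have hunit : ‖cexp (-(I * ω) * s)‖ = 1 := by simp [Complex.norm_exp]
  rw [hsplit]
  refine (norm_sub_le _ _).trans ?_
  rw [norm_smul, norm_smul, hunit, one_mul, norm_sub_rev, add_comm]
  gcongr
  simpa [abs_mul] using Real.norm_exp_I_mul_ofReal_sub_one_le (x := (ω' - ω) * s)

theorem mul_norm_le_four_mul_norm_of_resolvent_eq (hU : ∀ s t : ℝ, U (s + t) = (U s).comp (U t))
    (hU_le : ∀ t : ℝ, ∀ f : E, ‖U t f‖ ≤ ‖f‖) {f z : E} {ω t : ℝ} (ht : 0 ≤ t)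
    (hf : Tendsto (fun s : ℝ => (s : ℂ)⁻¹ • (U s f - f)) (𝓝[≠] 0) (𝓝 ((I * ω) • f - z)))
    (hz : ∀ s ∈ Ico 0 t, ‖z - cexp (-(I * ω) * s) • U s z‖ ≤ ‖z‖ / 2) :
    t * ‖z‖ ≤ 4 * ‖f‖ := by
  set G : ℝ → E := fun s => cexp (-(I * ω) * s) • U s f
  have hG : ∀ s : ℝ, HasDerivAt G (-(cexp (-(I * ω) * s) • U s z)) s := fun s =>
    (hasDerivAt_exp_smul_orbit hU hf _ s).congr_deriv <| by
      rw [← smul_neg, ← map_neg, neg_smul]; congr 2; abel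
  have hnorm : ∀ s : ℝ, ‖G s‖ ≤ ‖f‖ := fun s => by
    simpa [G, norm_smul, Complex.norm_exp] using hU_le s f
  have hlower := mul_sub_le_norm_image_sub_of_norm_deriv_sub_le (v := -z) (δ := ‖z‖ / 2) ht
    (fun s _ => hG s) (fun s hs => by rw [neg_sub_neg]; exact hz s hs)
  have hupper : ‖G t - G 0‖ ≤ 2 * ‖f‖ := by
    linarith [norm_sub_le (G t) (G 0), hnorm t, hnorm 0]
  rw [norm_neg] at hlower
  linarith

end OneParameterGroup

theorem stmt17_general {H : Type*} [NormedAddCommGroup H] [InnerProductSpace ℂ H]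
    (U : ℝ → H →L[ℂ] H)
    (hUgrp : ∀ s t : ℝ, U (s + t) = (U s).comp (U t))
    (hUiso : ∀ t : ℝ, ∀ f : H, ‖U t f‖ = ‖f‖)
    (V : H →ₗ.[ℂ] H)
    (hVgen : ∀ f (hf : f ∈ V.domain),
      Tendsto (fun t : ℝ => (t : ℂ)⁻¹ • (U t f - f)) (𝓝[≠] 0) (𝓝 (V ⟨f, hf⟩)))
    (ω : ℝ) (ωτ : ℝ → ℝ) (hω : Tendsto ωτ (𝓝[>] (0 : ℝ)) (𝓝 ω))
    (z : ℝ → H) (hz : ∀ τ > (0 : ℝ), ‖z τ‖ = 1)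
    (happrox : ∀ ε > (0 : ℝ), ∃ T : ℝ → ℝ,
      Tendsto T (𝓝[>] (0 : ℝ)) atTop ∧
      ∀ τ > (0 : ℝ), ∀ t : ℝ, |t| < T τ →
        ‖U t (z τ) - Complex.exp (Complex.I * (ωτ τ * t)) • z τ‖ < ε) :
    ¬ ∃ R : H →L[ℂ] H,
      (∀ f : H, ∃ h : R f ∈ V.domain,
        (Complex.I * ω) • R f - V ⟨R f, h⟩ = f) ∧
      (∀ f (hf : f ∈ V.domain), R ((Complex.I * ω) • f - V ⟨f, hf⟩) = f) := by
  rintro ⟨R, hR, -⟩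
  set t := 4 * ‖R‖ + 1
  obtain ⟨T, hT, happ⟩ := happrox (1 / 4) (by norm_num)
  have hdrift : Tendsto (fun τ => |ωτ τ - ω| * t) (𝓝[>] 0) (𝓝 0) := by
    simpa using ((hω.sub_const ω).abs.mul_const t)
  obtain ⟨τ, hτT, hτω, hτ⟩ := ((hT.eventually_gt_atTop t).and
    ((hdrift.eventually (gt_mem_nhds (by norm_num : (0 : ℝ) < 1 / 4))).and
      self_mem_nhdsWithin)).exists
  have hzτ := hz τ hτ
  obtain ⟨hRz, hRz_eq⟩ := hR (z τ)
  have hV : V ⟨R (z τ), hRz⟩ = (Complex.I * ω) • R (z τ) - z τ := by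
    rw [eq_sub_iff_add_eq, ← eq_sub_iff_add_eq', hRz_eq]
  have hz_twisted : ∀ s ∈ Ico 0 t,
      ‖z τ - Complex.exp (-(Complex.I * ω) * s) • U s (z τ)‖ ≤ ‖z τ‖ / 2 := by
    rintro s ⟨hs0, hst⟩
    have happ_s := happ τ hτ s (by rw [abs_of_nonneg hs0]; linarith)
    have hdrift_s : |ωτ τ - ω| * |s| ≤ |ωτ τ - ω| * t := by
      rw [abs_of_nonneg hs0]; gcongr
    have := norm_sub_exp_smul_le (z τ) (U s (z τ)) ω (ωτ τ) s
    rw [hzτ, mul_one] at this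
    linarith
  have hbound := mul_norm_le_four_mul_norm_of_resolvent_eq hUgrp (fun s f => (hUiso s f).le)
    (by positivity) (hV ▸ hVgen _ hRz) hz_twisted
  have hRzτ := R.le_opNorm (z τ)
  rw [hzτ] at hbound hRzτ
  linarith

/-- Let `U^t = e^{tV}` be a strongly continuous unitary group on a Hilbert space with
skew-adjoint generator `V` (characterized by `V f = lim_{t→0} (U^t f − f)/t` on its
maximal domain).  Suppose `ω_τ → ω` and `z_τ` are unit vectors such that for every
`ε > 0`, `(e^{iω_τ t}, z_τ)` is an `ε`-approximate eigenpair of `U^t` for all `t` in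
intervals `(−T(ε,τ), T(ε,τ))` whose lengths diverge as `τ → 0⁺`.  Then `iω` lies in the
spectrum of `V`: `iω − V` has no bounded two-sided inverse. -/
theorem stmt17 {H : Type*} [NormedAddCommGroup H] [InnerProductSpace ℂ H] [CompleteSpace H]
    (U : ℝ → H →L[ℂ] H)
    (hU0 : U 0 = 1)
    (hUgrp : ∀ s t : ℝ, U (s + t) = (U s).comp (U t))
    (hUiso : ∀ t : ℝ, ∀ f : H, ‖U t f‖ = ‖f‖)
    (V : H →ₗ.[ℂ] H) (hdense : Dense (V.domain : Set H))
    (hVgen : ∀ f (hf : f ∈ V.domain),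
      Tendsto (fun t : ℝ => (t : ℂ)⁻¹ • (U t f - f)) (𝓝[≠] 0) (𝓝 (V ⟨f, hf⟩)))
    (hVdom : ∀ f g : H,
      Tendsto (fun t : ℝ => (t : ℂ)⁻¹ • (U t f - f)) (𝓝[≠] 0) (𝓝 g) → f ∈ V.domain)
    (ω : ℝ) (ωτ : ℝ → ℝ) (hω : Tendsto ωτ (𝓝[>] (0 : ℝ)) (𝓝 ω))
    (z : ℝ → H) (hz : ∀ τ > (0 : ℝ), ‖z τ‖ = 1)
    (happrox : ∀ ε > (0 : ℝ), ∃ T : ℝ → ℝ,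
      Tendsto T (𝓝[>] (0 : ℝ)) atTop ∧
      ∀ τ > (0 : ℝ), ∀ t : ℝ, |t| < T τ →
        ‖U t (z τ) - Complex.exp (Complex.I * (ωτ τ * t)) • z τ‖ < ε) :
    ¬ ∃ R : H →L[ℂ] H,
      (∀ f : H, ∃ h : R f ∈ V.domain,
        (Complex.I * ω) • R f - V ⟨R f, h⟩ = f) ∧
      (∀ f (hf : f ∈ V.domain), R ((Complex.I * ω) • f - V ⟨f, hf⟩) = f) :=
  stmt17_general U hUgrp hUiso V hVgen ω ωτ hω z hz happrox
end
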